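/- Rigidity of the twisted overlap: let Φ be a unital CP map on D×D complex matrices with Kraus operators K : Fin d → Matrix (Fin D) (Fin D) ℂ (so ∑_a (K a) * (K a)ᴴ = 1), and assume that every matrix M on (Fin D × Fin D) with (Φ⊗Φ)(M) = M is a scalar multiple of the identity (this holds when Φ is primitive). Let ρ be a positive-definite matrix on (Fin D × Fin D) with trace ρ = 1. If trace(ρ * (Φ⊗Φ)(𝔰) * 𝔰) = 1, then D = 1. -/

import Mathlib

open Matrix
open scoped Kronecker ComplexOrder

/-!
Let `L a` be the Kraus operators of `Φ ⊗ Φ` and `T = (Φ ⊗ Φ)(𝔰)`. Since `𝔰` is a self-adjoint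
unitary and `Φ ⊗ Φ` is unital, `∑ a, [𝔰, L a] [𝔰, L a]ᴴ = 2 - 𝔰 T - T 𝔰`. The hypothesis says
`tr (ρ T 𝔰) = 1`, and `tr (ρ 𝔰 T)` is its complex conjugate, so pairing with the state `ρ` gives
`∑ a, tr (ρ [𝔰, L a] [𝔰, L a]ᴴ) = 0`. Each term is nonnegative and, `ρ` being positive definite,
vanishes only if `[𝔰, L a] = 0`. Thus `𝔰` commutes with every Kraus operator, hence is a fixed point
of the unital map `Φ ⊗ Φ`, hence a scalar; but the swap is a scalar only when `D ≤ 1`.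
-/

/-- The swap matrix on `Fin D × Fin D`. -/
def swapMatrix (D : ℕ) : Matrix (Fin D × Fin D) (Fin D × Fin D) ℂ :=
  fun p q => if p.1 = q.2 ∧ p.2 = q.1 then 1 else 0

/-- The tensor square `Φ ⊗ Φ` of the CP map with Kraus operators `K`, acting on matrices
indexed by `Fin D × Fin D`; its Kraus operators are the Kronecker products `K a ⊗ₖ K b`. -/
noncomputable def tensorSqCP {D d : ℕ} (K : Fin d → Matrix (Fin D) (Fin D) ℂ)
    (M : Matrix (Fin D × Fin D) (Fin D × Fin D) ℂ) :
    Matrix (Fin D × Fin D) (Fin D × Fin D) ℂ :=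
  ∑ a : Fin d × Fin d, (K a.1 ⊗ₖ K a.2) * M * (K a.1 ⊗ₖ K a.2)ᴴ

lemma isHermitian_swapMatrix (D : ℕ) : (swapMatrix D).IsHermitian := by
  ext p q
  simp only [conjTranspose_apply, swapMatrix]
  split_ifs <;> simp_all [and_comm, eq_comm]

lemma swapMatrix_mul_self (D : ℕ) : swapMatrix D * swapMatrix D = 1 := by
  ext ⟨i, j⟩ ⟨k, l⟩
  rw [mul_apply, Finset.sum_eq_single (j, i)]
  · simp [swapMatrix, one_apply, and_comm]
  · rintro ⟨r, s⟩ - hrs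
    simp only [swapMatrix, ite_mul, one_mul, zero_mul]
    rw [if_neg]
    rintro ⟨rfl, rfl⟩
    exact hrs rfl
  · simp

lemma le_one_of_swapMatrix_eq_smul_one {D : ℕ} {c : ℂ} (hc : swapMatrix D = c • 1) : D ≤ 1 := by
  by_contra! hD
  let i : Fin D := ⟨0, by omega⟩
  let j : Fin D := ⟨1, hD⟩
  have hij : i ≠ j := by simp [i, j, Fin.ext_iff]
  have hdiag := congrFun₂ hc (i, i) (i, i)
  have hoff := congrFun₂ hc (i, j) (i, j)
  simp [swapMatrix, hij, hij.symm] at hdiag hoff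
  exact one_ne_zero (hdiag.trans hoff.symm)

namespace Matrix

variable {𝕜 m n ι κ : Type*} [RCLike 𝕜] [Fintype m] [Fintype n] [Fintype ι] [Fintype κ]

lemma PosSemidef.trace_mul_mul_conjTranspose_nonneg {ρ : Matrix n n 𝕜} (hρ : ρ.PosSemidef)
    (B : Matrix n m 𝕜) : 0 ≤ (ρ * (B * Bᴴ)).trace := by
  rw [← Matrix.mul_assoc, trace_mul_cycle]
  exact (hρ.conjTranspose_mul_mul_same B).trace_nonneg

lemma PosDef.trace_mul_mul_conjTranspose_eq_zero_iff {ρ : Matrix n n 𝕜} (hρ : ρ.PosDef)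
    {B : Matrix n m 𝕜} : (ρ * (B * Bᴴ)).trace = 0 ↔ B = 0 := by
  refine ⟨fun h => ?_, fun h => by simp [h]⟩
  rw [← Matrix.mul_assoc, trace_mul_cycle] at h
  have hdiag : ∀ j, (Bᴴ * ρ * B) j j = 0 := congrFun <| (Fintype.sum_eq_zero_iff_of_nonneg
    fun _ => (hρ.posSemidef.conjTranspose_mul_mul_same B).diag_nonneg).mp h
  ext k j
  have hcol : (fun k => B k j) = 0 := by
    by_contra hne
    refine (hρ.dotProduct_mulVec_pos hne).ne' (Eq.trans ?_ (hdiag j))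
    simp only [mul_apply, dotProduct, mulVec, conjTranspose_apply, Pi.star_apply,
      Finset.mul_sum, Finset.sum_mul, mul_assoc]
    exact Finset.sum_comm
  exact congrFun hcol k

lemma sum_kronecker_mul_conjTranspose_eq_one [DecidableEq m] [DecidableEq n]
    {K : ι → Matrix m m 𝕜} {K' : κ → Matrix n n 𝕜}
    (hK : ∑ i, K i * (K i)ᴴ = 1) (hK' : ∑ j, K' j * (K' j)ᴴ = 1) :
    ∑ a : ι × κ, (K a.1 ⊗ₖ K' a.2) * (K a.1 ⊗ₖ K' a.2)ᴴ = 1 := by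
  simp_rw [conjTranspose_kronecker, ← mul_kronecker_mul]
  calc ∑ a : ι × κ, (K a.1 * (K a.1)ᴴ) ⊗ₖ (K' a.2 * (K' a.2)ᴴ)
      = kroneckerBilinear (R := 𝕜) (∑ i, K i * (K i)ᴴ) (∑ j, K' j * (K' j)ᴴ) := by
        simp only [map_sum, LinearMap.sum_apply, Fintype.sum_prod_type]; exact Finset.sum_comm
    _ = 1 := by simp [hK, hK', kroneckerBilinear]

noncomputable def krausMap (L : ι → Matrix n n 𝕜) (M : Matrix n n 𝕜) : Matrix n n 𝕜 :=
  ∑ i, L i * M * (L i)ᴴ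

variable {L : ι → Matrix n n 𝕜}

lemma IsHermitian.krausMap {M : Matrix n n 𝕜} (hM : M.IsHermitian) :
    (krausMap L M).IsHermitian := by
  simp only [IsHermitian, Matrix.krausMap, conjTranspose_sum, conjTranspose_mul,
    conjTranspose_conjTranspose, hM.eq, Matrix.mul_assoc]

variable [DecidableEq n]

lemma krausMap_eq_self_of_commute (hL : ∑ i, L i * (L i)ᴴ = 1) {M : Matrix n n 𝕜}
    (hM : ∀ i, Commute M (L i)) : krausMap L M = M :=
  calc krausMap L M = ∑ i, M * (L i * (L i)ᴴ) :=
        Finset.sum_congr rfl fun i _ => by rw [← (hM i).eq, Matrix.mul_assoc]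
    _ = M := by rw [← Finset.mul_sum, hL, Matrix.mul_one]

lemma sum_commutator_mul_conjTranspose (hL : ∑ i, L i * (L i)ᴴ = 1) {S : Matrix n n 𝕜}
    (hS : S.IsHermitian) (hSS : S * S = 1) :
    ∑ i, (S * L i - L i * S) * (S * L i - L i * S)ᴴ
      = 2 - S * krausMap L S - krausMap L S * S := by
  have hterm : ∀ i, (S * L i - L i * S) * (S * L i - L i * S)ᴴ
      = S * (L i * (L i)ᴴ) * S - S * (L i * S * (L i)ᴴ) - L i * S * (L i)ᴴ * S
        + L i * (S * S) * (L i)ᴴ := fun i => by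
    simp only [conjTranspose_sub, conjTranspose_mul, hS.eq]
    noncomm_ring
  simp only [hterm, hSS, Matrix.mul_one, Finset.sum_add_distrib, Finset.sum_sub_distrib,
    ← Finset.mul_sum, ← Finset.sum_mul, hL, krausMap]
  rw [← one_add_one_eq_two]
  abel

lemma commute_of_trace_mul_krausMap_mul_eq_one (hL : ∑ i, L i * (L i)ᴴ = 1)
    {S : Matrix n n 𝕜} (hS : S.IsHermitian) (hSS : S * S = 1) {ρ : Matrix n n 𝕜}
    (hρ : ρ.PosDef) (hρtr : ρ.trace = 1) (h : (ρ * krausMap L S * S).trace = 1) (i : ι) :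
    Commute S (L i) := by
  have hT : (krausMap L S).IsHermitian := hS.krausMap
  have h' : (ρ * S * krausMap L S).trace = 1 := by
    have hadj : (ρ * S * krausMap L S)ᴴ = krausMap L S * S * ρ := by
      simp only [conjTranspose_mul, hS.eq, hT.eq, hρ.isHermitian.eq, Matrix.mul_assoc]
    rw [← star_star (ρ * S * krausMap L S).trace, ← trace_conjTranspose, hadj, trace_mul_cycle,
      h, star_one]
  have hsum : (ρ * ∑ i, (S * L i - L i * S) * (S * L i - L i * S)ᴴ).trace = 0 := by
    rw [sum_commutator_mul_conjTranspose hL hS hSS]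
    simp only [Matrix.mul_sub, trace_sub, ← Matrix.mul_assoc, h, h']
    rw [← one_add_one_eq_two, Matrix.mul_add, Matrix.mul_one, trace_add, hρtr]
    ring
  rw [Finset.mul_sum, trace_sum, Fintype.sum_eq_zero_iff_of_nonneg
    fun _ => hρ.posSemidef.trace_mul_mul_conjTranspose_nonneg _] at hsum
  exact sub_eq_zero.mp (hρ.trace_mul_mul_conjTranspose_eq_zero_iff.mp (congrFun hsum i))

end Matrix

lemma tensorSqCP_eq_krausMap {D d : ℕ} (K : Fin d → Matrix (Fin D) (Fin D) ℂ) :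
    tensorSqCP K = krausMap fun a : Fin d × Fin d => K a.1 ⊗ₖ K a.2 :=
  rfl

/-- Rigidity of the twisted overlap: if `Φ` is a unital CP map on `D × D` matrices such that
every fixed point of `Φ ⊗ Φ` is a scalar multiple of the identity, `ρ` is a positive-definite
state on the doubled space, and `trace (ρ * (Φ⊗Φ)(𝔰) * 𝔰) = 1`, then `D = 1`. -/
theorem twisted_overlap_rigidity
    (D d : ℕ) (K : Fin d → Matrix (Fin D) (Fin D) ℂ)
    (hunital : ∑ a, K a * (K a)ᴴ = (1 : Matrix (Fin D) (Fin D) ℂ))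
    (hfix : ∀ M : Matrix (Fin D × Fin D) (Fin D × Fin D) ℂ,
      tensorSqCP K M = M → ∃ c : ℂ, M = c • (1 : Matrix (Fin D × Fin D) (Fin D × Fin D) ℂ))
    (ρ : Matrix (Fin D × Fin D) (Fin D × Fin D) ℂ)
    (hρ : ρ.PosDef) (hρtr : ρ.trace = 1)
    (h : (ρ * tensorSqCP K (swapMatrix D) * swapMatrix D).trace = 1) :
    D = 1 := by
  have hunital₂ : ∑ a : Fin d × Fin d, (K a.1 ⊗ₖ K a.2) * (K a.1 ⊗ₖ K a.2)ᴴ = 1 :=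
    sum_kronecker_mul_conjTranspose_eq_one hunital hunital
  rw [tensorSqCP_eq_krausMap] at hfix h
  have hcomm := commute_of_trace_mul_krausMap_mul_eq_one hunital₂ (isHermitian_swapMatrix D)
    (swapMatrix_mul_self D) hρ hρtr h
  obtain ⟨c, hc⟩ := hfix _ (krausMap_eq_self_of_commute hunital₂ hcomm)
  have hD : D ≠ 0 := by
    rintro rfl
    simp at hρtr
  have := le_one_of_swapMatrix_eq_smul_one hc
  omega
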